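/- Let p₁, p₂ ∈ [1,∞] and q ∈ [1,∞], let α > 0, let m ∈ ℤ, and set λ := 2^m. For Schwartz functions F, u : ℝ² → ℂ define the rescalings F_λ(x) := λ²·F(λx) and u_λ(x) := λ·u(λx). Then ‖F_λ‖_{D^{λα}_{p₁,p₂;q}} = ‖F‖_{D^{α}_{p₁,p₂;q}} and ‖u_λ‖_{S^{λα}_{p₁,p₂;q}} = ‖u‖_{S^{α}_{p₁,p₂;q}} (equalities in [0,∞]); i.e., the data norm D and the solution norm S are invariant under the scaling (u,F) ↦ (λu(λ·), λ²F(λ·)), α ↦ λα, for dyadic λ. -/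

import Mathlib

open MeasureTheory Real Complex
open scoped FourierTransform ENNReal SchwartzMap

noncomputable section

/-- Partial Fourier transform in the second variable. -/
def pFT (g : ℝ × ℝ → ℂ) (y ξ : ℝ) : ℂ := 𝓕 (fun x₂ : ℝ => g (y, x₂)) ξ

/-- Littlewood–Paley block in the second variable. -/
def LPblock (φ₀ : ℝ → ℝ) (j : ℤ) (g : ℝ × ℝ → ℂ) (x₁ x₂ : ℝ) : ℂ :=
  𝓕⁻ (fun ξ : ℝ => (φ₀ ((2:ℝ) ^ (-j) * ξ) : ℂ) * pFT g x₁ ξ) x₂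

/-- Mixed norm `L^{p₁}_{x₁} L^{p₂}_{x₂}` of `h : ℝ → ℝ → ℂ`. -/
def mixedNorm (p₁ p₂ : ℝ≥0∞) (h : ℝ → ℝ → ℂ) : ℝ≥0∞ :=
  if p₁ = ∞ then essSup (fun x₁ : ℝ => eLpNorm (h x₁) p₂ volume) volume
  else (∫⁻ x₁ : ℝ, (eLpNorm (h x₁) p₂ volume) ^ p₁.toReal) ^ (1 / p₁.toReal)

/-- `ℓ^q(ℤ)`-norm, valued in `[0,∞]`. -/
def ellq (q : ℝ≥0∞) (a : ℤ → ℝ≥0∞) : ℝ≥0∞ :=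
  if q = ∞ then ⨆ j : ℤ, a j
  else (∑' j : ℤ, a j ^ q.toReal) ^ (1 / q.toReal)

/-- The summand `2^{sj} ‖Δ_j g‖_{L^{p₁}L^{p₂}}` of the anisotropic Besov norm. -/
def besovSeq (φ₀ : ℝ → ℝ) (s : ℝ) (p₁ p₂ : ℝ≥0∞) (g : ℝ × ℝ → ℂ) (j : ℤ) : ℝ≥0∞ :=
  ENNReal.ofReal ((2:ℝ) ^ (s * (j : ℝ))) * mixedNorm p₁ p₂ (LPblock φ₀ j g)

/-- Anisotropic Besov norm `‖g‖_{Ḃ^s_{p₁,p₂;q}}`. -/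
def besovNorm (φ₀ : ℝ → ℝ) (s : ℝ) (p₁ p₂ q : ℝ≥0∞) (g : ℝ × ℝ → ℂ) : ℝ≥0∞ :=
  ellq q (besovSeq φ₀ s p₁ p₂ g)

/-- High-frequency hybrid norm `‖g‖^{h;α}_{Ḃ^s_{p₁,p₂;q}}` (frequencies `2^j > α`). -/
def besovHigh (φ₀ : ℝ → ℝ) (α s : ℝ) (p₁ p₂ q : ℝ≥0∞) (g : ℝ × ℝ → ℂ) : ℝ≥0∞ :=
  ellq q (fun j : ℤ => if α < (2:ℝ) ^ j then besovSeq φ₀ s p₁ p₂ g j else 0)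

/-- Low-frequency hybrid norm `‖g‖^{ℓ;α}_{Ḃ^s_{p₁,p₂;q}}` (frequencies `2^j ≤ α`). -/
def besovLow (φ₀ : ℝ → ℝ) (α s : ℝ) (p₁ p₂ q : ℝ≥0∞) (g : ℝ × ℝ → ℂ) : ℝ≥0∞ :=
  ellq q (fun j : ℤ => if (2:ℝ) ^ j ≤ α then besovSeq φ₀ s p₁ p₂ g j else 0)

/-- Solution-space norm
`‖u‖_{S^α} = α^{-1/p₁} ‖u‖^{h;α}_{Ḃ^{2/p₁+1/p₂−1}} + ‖u‖^{ℓ;α}_{Ḃ^{1/p₁+1/p₂−1}}`. -/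
def Snorm (φ₀ : ℝ → ℝ) (α : ℝ) (p₁ p₂ q : ℝ≥0∞) (u : ℝ × ℝ → ℂ) : ℝ≥0∞ :=
  ENNReal.ofReal (α ^ (-(1/p₁).toReal)) *
      besovHigh φ₀ α (2 * (1/p₁).toReal + (1/p₂).toReal - 1) p₁ p₂ q u +
    besovLow φ₀ α ((1/p₁).toReal + (1/p₂).toReal - 1) p₁ p₂ q u

/-- Data-space norm
`‖F‖_{D^α} = α^{-1/p₁} ‖F‖^{h;α}_{Ḃ^{2/p₁+1/p₂−2}} + ‖F‖^{ℓ;α}_{Ḃ^{1/p₁+1/p₂−2}}`. -/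
def Dnorm (φ₀ : ℝ → ℝ) (α : ℝ) (p₁ p₂ q : ℝ≥0∞) (F : ℝ × ℝ → ℂ) : ℝ≥0∞ :=
  ENNReal.ofReal (α ^ (-(1/p₁).toReal)) *
      besovHigh φ₀ α (2 * (1/p₁).toReal + (1/p₂).toReal - 2) p₁ p₂ q F +
    besovLow φ₀ α ((1/p₁).toReal + (1/p₂).toReal - 2) p₁ p₂ q F

private lemma lintegral_comp_const_mul'' (g : ℝ → ℝ≥0∞) {c : ℝ} (hc : c ≠ 0) :
    ∫⁻ x : ℝ, g (c * x) = ENNReal.ofReal |c⁻¹| * ∫⁻ x, g x := by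
  let e : ℝ ≃ᵐ ℝ := (Homeomorph.mulLeft₀ c hc).toMeasurableEquiv
  have h1 : ∫⁻ x : ℝ, g (c * x) = ∫⁻ y, g y ∂(Measure.map e volume) :=
    (MeasureTheory.lintegral_map_equiv g e).symm
  have h2 : Measure.map (⇑e) volume = ENNReal.ofReal |c⁻¹| • volume := by
    have he : ⇑e = (c * ·) := rfl
    rw [he, Real.map_volume_mul_left hc]
  rw [h1, h2, lintegral_smul_measure, smul_eq_mul]

private lemma essSup_comp_const_mul' (g : ℝ → ℝ≥0∞) {c : ℝ} (hc : c ≠ 0) :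
    essSup (fun x : ℝ => g (c * x)) volume = essSup g volume := by
  let e : ℝ ≃ᵐ ℝ := (Homeomorph.mulLeft₀ c hc).toMeasurableEquiv
  have h1 : essSup (fun x : ℝ => g (c * x)) volume = essSup g (Measure.map e volume) :=
    (e.measurableEmbedding.essSup_map_measure).symm
  have h2 : Measure.map (⇑e) volume = ENNReal.ofReal |c⁻¹| • volume := by
    have he : ⇑e = (c * ·) := rfl
    rw [he, Real.map_volume_mul_left hc]
  rw [h1, h2, essSup_ennreal_smul_measure]
  simp [hc]

private lemma ofReal_inv_rpow {c : ℝ} (hc : 0 < c) {p : ℝ≥0∞} :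
    (ENNReal.ofReal c⁻¹) ^ (1 / p.toReal) = ENNReal.ofReal (c ^ (-(1/p).toReal)) := by
  rw [ENNReal.ofReal_rpow_of_pos (inv_pos.mpr hc)]
  congr 1
  rw [← Real.rpow_neg_one c, ← Real.rpow_mul hc.le]
  congr 1
  simp [one_div, ENNReal.toReal_inv]

private lemma eLpNorm_comp_const_mul' (f : ℝ → ℂ) {c : ℝ} (hc : 0 < c) (p : ℝ≥0∞) :
    eLpNorm (fun x : ℝ => f (c * x)) p volume
      = ENNReal.ofReal (c ^ (-(1/p).toReal)) * eLpNorm f p volume := by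
  rcases eq_or_ne p 0 with rfl | hp0
  · simp
  rcases eq_or_ne p ∞ with rfl | hptop
  · simp only [eLpNorm_exponent_top, eLpNormEssSup]
    rw [essSup_comp_const_mul' (fun x => ‖f x‖ₑ) hc.ne']
    simp
  · rw [eLpNorm_eq_lintegral_rpow_enorm_toReal hp0 hptop,
        eLpNorm_eq_lintegral_rpow_enorm_toReal hp0 hptop,
        lintegral_comp_const_mul'' (fun x => ‖f x‖ₑ ^ p.toReal) hc.ne',
        ENNReal.mul_rpow_of_nonneg _ _ (by positivity : (0:ℝ) ≤ 1 / p.toReal)]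
    congr 1
    rw [abs_of_pos (inv_pos.mpr hc)]
    exact ofReal_inv_rpow hc

private lemma mixedNorm_comp (k : ℂ) (h : ℝ → ℝ → ℂ) {c : ℝ} (hc : 0 < c)
    (p₁ p₂ : ℝ≥0∞) (hp₁ : 1 ≤ p₁) :
    mixedNorm p₁ p₂ (fun x₁ x₂ => k * h (c * x₁) (c * x₂))
      = ((‖k‖₊ : ℝ≥0∞) * ENNReal.ofReal (c ^ (-(1/p₂).toReal)))
          * (ENNReal.ofReal (c ^ (-(1/p₁).toReal)) * mixedNorm p₁ p₂ h) := by
  set K : ℝ≥0∞ := (‖k‖₊ : ℝ≥0∞) * ENNReal.ofReal (c ^ (-(1/p₂).toReal)) with hK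
  have hKne : K ≠ ∞ := by
    simp [hK, ENNReal.mul_ne_top, ENNReal.ofReal_ne_top]
  have inner : ∀ x₁ : ℝ,
      eLpNorm (fun x₂ => k * h (c * x₁) (c * x₂)) p₂ volume
        = K * eLpNorm (h (c * x₁)) p₂ volume := by
    intro x₁
    have h1 : (fun x₂ => k * h (c * x₁) (c * x₂)) = k • (fun x₂ => h (c * x₁) (c * x₂)) := by
      funext x₂; simp [smul_eq_mul]
    rw [h1, eLpNorm_const_smul, eLpNorm_comp_const_mul' (h (c * x₁)) hc p₂, hK, enorm_eq_nnnorm]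
    ring
  unfold mixedNorm
  split_ifs with hinf
  · simp_rw [inner]
    rw [ENNReal.essSup_const_mul,
      essSup_comp_const_mul' (fun x => eLpNorm (h x) p₂ volume) hc.ne']
    simp [hinf]
  · have hp0 : p₁ ≠ 0 := (lt_of_lt_of_le zero_lt_one hp₁).ne'
    have hpr : 0 < p₁.toReal := ENNReal.toReal_pos hp0 hinf
    simp_rw [inner]
    have e1 : ∫⁻ x₁ : ℝ, (K * eLpNorm (h (c * x₁)) p₂ volume) ^ p₁.toReal
        = K ^ p₁.toReal * (ENNReal.ofReal |c⁻¹| * ∫⁻ x₁ : ℝ, eLpNorm (h x₁) p₂ volume ^ p₁.toReal) := by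
      rw [← lintegral_comp_const_mul'' (fun x => eLpNorm (h x) p₂ volume ^ p₁.toReal) hc.ne',
          ← lintegral_const_mul' _ _ (ENNReal.rpow_ne_top_of_nonneg hpr.le hKne)]
      congr 1
      funext x₁
      rw [ENNReal.mul_rpow_of_nonneg _ _ hpr.le]
    rw [e1, ENNReal.mul_rpow_of_nonneg _ _ (by positivity : (0:ℝ) ≤ 1 / p₁.toReal),
        ENNReal.mul_rpow_of_nonneg _ _ (by positivity : (0:ℝ) ≤ 1 / p₁.toReal),
        ← ENNReal.rpow_mul K, mul_one_div_cancel hpr.ne', ENNReal.rpow_one,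
        abs_of_pos (inv_pos.mpr hc), ofReal_inv_rpow hc]

private lemma fourierIntegral_const_mul' (k : ℂ) (f : ℝ → ℂ) (ξ : ℝ) :
    𝓕 (fun x : ℝ => k * f x) ξ = k * 𝓕 f ξ := by
  simp_rw [Real.fourier_eq', smul_eq_mul, ← integral_const_mul]
  congr 1; ext t; ring

private lemma fourierIntegralInv_const_mul' (k : ℂ) (f : ℝ → ℂ) (ξ : ℝ) :
    𝓕⁻ (fun x : ℝ => k * f x) ξ = k * 𝓕⁻ f ξ := by
  simp_rw [Real.fourierInv_eq', smul_eq_mul, ← integral_const_mul]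
  congr 1; ext t; ring

private lemma fourierIntegral_comp_mul' (f : ℝ → ℂ) {c : ℝ} (hc : c ≠ 0) (ξ : ℝ) :
    𝓕 (fun t : ℝ => f (c * t)) ξ = (|c⁻¹| : ℝ) * 𝓕 f (ξ / c) := by
  simp_rw [Real.fourier_eq', smul_eq_mul, RCLike.inner_apply, conj_trivial, mul_comm ξ, mul_comm (ξ / c)]
  have key : (fun t : ℝ => Complex.exp (↑(-2 * π * (t * ξ)) * I) * f (c * t))
      = fun t : ℝ => (fun y : ℝ => Complex.exp (↑(-2 * π * (y * (ξ / c))) * I) * f y) (c * t) := by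
    funext t
    simp only
    rw [show c * t * (ξ / c) = t * ξ by field_simp]
  rw [key, MeasureTheory.Measure.integral_comp_mul_left
      (fun y : ℝ => Complex.exp (↑(-2 * π * (y * (ξ / c))) * I) * f y) c]
  simp [Complex.real_smul]

private lemma fourierIntegralInv_comp_mul' (f : ℝ → ℂ) {c : ℝ} (hc : c ≠ 0) (ξ : ℝ) :
    𝓕⁻ (fun t : ℝ => f (c * t)) ξ = (|c⁻¹| : ℝ) * 𝓕⁻ f (ξ / c) := by
  simp_rw [Real.fourierInv_eq', smul_eq_mul, RCLike.inner_apply, conj_trivial, mul_comm ξ, mul_comm (ξ / c)]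
  have key : (fun t : ℝ => Complex.exp (↑(2 * π * (t * ξ)) * I) * f (c * t))
      = fun t : ℝ => (fun y : ℝ => Complex.exp (↑(2 * π * (y * (ξ / c))) * I) * f y) (c * t) := by
    funext t
    simp only
    rw [show c * t * (ξ / c) = t * ξ by field_simp]
  rw [key, MeasureTheory.Measure.integral_comp_mul_left
      (fun y : ℝ => Complex.exp (↑(2 * π * (y * (ξ / c))) * I) * f y) c]
  simp [Complex.real_smul]

private lemma pFT_comp (g : ℝ × ℝ → ℂ) (k : ℂ) {c : ℝ} (hc : 0 < c) (y ξ : ℝ) :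
    pFT (fun x : ℝ × ℝ => k * g (c • x)) y ξ
      = k * ((c⁻¹ : ℝ) : ℂ) * pFT g (c * y) (ξ / c) := by
  unfold pFT
  have h1 : (fun x₂ : ℝ => k * g (c • (y, x₂)))
      = fun x₂ : ℝ => (fun t : ℝ => k * g (c * y, t)) (c * x₂) := by
    funext x₂
    simp [Prod.smul_mk, smul_eq_mul]
  rw [h1, fourierIntegral_comp_mul' (fun t : ℝ => k * g (c * y, t)) hc.ne' ξ,
      fourierIntegral_const_mul' k (fun t : ℝ => g (c * y, t)) (ξ / c),
      abs_of_pos (inv_pos.mpr hc)]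
  ring

private lemma LPblock_comp (φ₀ : ℝ → ℝ) (g : ℝ × ℝ → ℂ) (k : ℂ) (m j : ℤ) (x₁ x₂ : ℝ) :
    LPblock φ₀ j (fun x : ℝ × ℝ => k * g (((2:ℝ) ^ m) • x)) x₁ x₂
      = k * LPblock φ₀ (j - m) g ((2:ℝ) ^ m * x₁) ((2:ℝ) ^ m * x₂) := by
  set c : ℝ := (2:ℝ) ^ m with hcdef
  have hc : 0 < c := zpow_pos (by norm_num) m
  have hcC : ((c : ℝ) : ℂ) ≠ 0 := by
    exact_mod_cast hc.ne'
  unfold LPblock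
  have h1 : (fun ξ : ℝ => (φ₀ ((2:ℝ) ^ (-j) * ξ) : ℂ) * pFT (fun x : ℝ × ℝ => k * g (c • x)) x₁ ξ)
      = fun ξ : ℝ => (k * ((c⁻¹ : ℝ) : ℂ)) *
          ((fun η : ℝ => (φ₀ ((2:ℝ) ^ (-(j - m)) * η) : ℂ) * pFT g (c * x₁) η) (c⁻¹ * ξ)) := by
    funext ξ
    rw [pFT_comp g k hc x₁ ξ]
    simp only
    have harg : (2:ℝ) ^ (-(j - m)) * (c⁻¹ * ξ) = (2:ℝ) ^ (-j) * ξ := by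
      rw [hcdef, ← zpow_neg, ← mul_assoc, ← zpow_add₀ (two_ne_zero (α := ℝ))]
      congr 2
      ring
    rw [harg, ← div_eq_inv_mul]
    ring
  rw [h1, fourierIntegralInv_const_mul' (k * ((c⁻¹ : ℝ) : ℂ))
        (fun ξ : ℝ => (fun η : ℝ => (φ₀ ((2:ℝ) ^ (-(j - m)) * η) : ℂ) * pFT g (c * x₁) η) (c⁻¹ * ξ)) x₂]
  rw [show (fun ξ : ℝ => (fun η : ℝ => (φ₀ ((2:ℝ) ^ (-(j - m)) * η) : ℂ) * pFT g (c * x₁) η) (c⁻¹ * ξ))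
      = (fun ξ : ℝ => (fun η : ℝ => (φ₀ ((2:ℝ) ^ (-(j - m)) * η) : ℂ) * pFT g (c * x₁) η) (c⁻¹ * ξ)) from rfl]
  rw [fourierIntegralInv_comp_mul'
      (fun η : ℝ => (φ₀ ((2:ℝ) ^ (-(j - m)) * η) : ℂ) * pFT g (c * x₁) η)
      (inv_ne_zero hc.ne') x₂]
  rw [abs_inv, abs_inv, inv_inv, abs_of_pos hc, show x₂ / c⁻¹ = c * x₂ by field_simp]
  push_cast
  field_simp

private lemma besovSeq_comp (φ₀ : ℝ → ℝ) (s : ℝ) (p₁ p₂ : ℝ≥0∞) (hp₁ : 1 ≤ p₁)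
    (g : ℝ × ℝ → ℂ) (k : ℂ) (m j : ℤ) :
    besovSeq φ₀ s p₁ p₂ (fun x : ℝ × ℝ => k * g (((2:ℝ) ^ m) • x)) j
      = (‖k‖₊ : ℝ≥0∞)
          * ENNReal.ofReal (((2:ℝ) ^ m : ℝ) ^ (s - (1/p₁).toReal - (1/p₂).toReal))
          * besovSeq φ₀ s p₁ p₂ g (j - m) := by
  set c : ℝ := (2:ℝ) ^ m with hcdef
  have hc : 0 < c := zpow_pos (by norm_num) m
  have key : ∀ x : ℝ, c ^ x = (2:ℝ) ^ ((m : ℝ) * x) := by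
    intro x
    rw [hcdef, ← Real.rpow_intCast 2 m, ← Real.rpow_mul (by norm_num)]
  unfold besovSeq
  have hfun : LPblock φ₀ j (fun x : ℝ × ℝ => k * g (c • x))
      = fun x₁ x₂ => k * LPblock φ₀ (j - m) g (c * x₁) (c * x₂) := by
    funext x₁ x₂
    exact LPblock_comp φ₀ g k m j x₁ x₂
  rw [hfun, mixedNorm_comp k (LPblock φ₀ (j - m) g) hc p₁ p₂ hp₁]
  have hA : ENNReal.ofReal ((2:ℝ) ^ (s * (j : ℝ))) * ENNReal.ofReal (c ^ (-(1/p₂).toReal))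
        * ENNReal.ofReal (c ^ (-(1/p₁).toReal))
      = ENNReal.ofReal (c ^ (s - (1/p₁).toReal - (1/p₂).toReal))
        * ENNReal.ofReal ((2:ℝ) ^ (s * ((j - m : ℤ) : ℝ))) := by
    rw [← ENNReal.ofReal_mul (by positivity), ← ENNReal.ofReal_mul (by positivity),
        ← ENNReal.ofReal_mul (by positivity)]
    congr 1
    rw [key, key, key, ← Real.rpow_add (by norm_num : (0:ℝ) < 2),
        ← Real.rpow_add (by norm_num : (0:ℝ) < 2), ← Real.rpow_add (by norm_num : (0:ℝ) < 2)]
    congr 1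
    push_cast
    ring
  calc ENNReal.ofReal ((2:ℝ) ^ (s * (j : ℝ)))
        * ((‖k‖₊ : ℝ≥0∞) * ENNReal.ofReal (c ^ (-(1/p₂).toReal))
            * (ENNReal.ofReal (c ^ (-(1/p₁).toReal)) * mixedNorm p₁ p₂ (LPblock φ₀ (j - m) g)))
      = (ENNReal.ofReal ((2:ℝ) ^ (s * (j : ℝ))) * ENNReal.ofReal (c ^ (-(1/p₂).toReal))
            * ENNReal.ofReal (c ^ (-(1/p₁).toReal)))
          * ((‖k‖₊ : ℝ≥0∞) * mixedNorm p₁ p₂ (LPblock φ₀ (j - m) g)) := by ring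
    _ = (ENNReal.ofReal (c ^ (s - (1/p₁).toReal - (1/p₂).toReal))
            * ENNReal.ofReal ((2:ℝ) ^ (s * ((j - m : ℤ) : ℝ))))
          * ((‖k‖₊ : ℝ≥0∞) * mixedNorm p₁ p₂ (LPblock φ₀ (j - m) g)) := by rw [hA]
    _ = (‖k‖₊ : ℝ≥0∞) * ENNReal.ofReal (c ^ (s - (1/p₁).toReal - (1/p₂).toReal))
          * (ENNReal.ofReal ((2:ℝ) ^ (s * ((j - m : ℤ) : ℝ)))
              * mixedNorm p₁ p₂ (LPblock φ₀ (j - m) g)) := by ring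

private lemma ellq_shift (q : ℝ≥0∞) (a : ℤ → ℝ≥0∞) (m : ℤ) :
    ellq q (fun j => a (j - m)) = ellq q a := by
  unfold ellq
  split_ifs
  · exact (Equiv.subRight m).iSup_comp (g := a)
  · congr 1
    exact (Equiv.subRight m).tsum_eq (f := fun j : ℤ => a j ^ q.toReal)

private lemma ellq_const_mul (q : ℝ≥0∞) (hq : 1 ≤ q) (C : ℝ≥0∞) (a : ℤ → ℝ≥0∞) :
    ellq q (fun j => C * a j) = C * ellq q a := by
  unfold ellq
  split_ifs with h
  · exact (ENNReal.mul_iSup C a).symm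
  · have hq0 : q ≠ 0 := (lt_of_lt_of_le zero_lt_one hq).ne'
    have hqr : 0 < q.toReal := ENNReal.toReal_pos hq0 h
    simp_rw [ENNReal.mul_rpow_of_nonneg _ _ hqr.le, ENNReal.tsum_mul_left,
      ENNReal.mul_rpow_of_nonneg _ _ (by positivity : (0:ℝ) ≤ 1 / q.toReal),
      ← ENNReal.rpow_mul, mul_one_div_cancel hqr.ne', ENNReal.rpow_one]

private lemma besovHigh_comp (φ₀ : ℝ → ℝ) (s : ℝ) (p₁ p₂ q : ℝ≥0∞) (hp₁ : 1 ≤ p₁)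
    (hq : 1 ≤ q) (α : ℝ) (g : ℝ × ℝ → ℂ) (k : ℂ) (m : ℤ) :
    besovHigh φ₀ ((2:ℝ) ^ m * α) s p₁ p₂ q (fun x : ℝ × ℝ => k * g (((2:ℝ) ^ m) • x))
      = (‖k‖₊ : ℝ≥0∞)
          * ENNReal.ofReal (((2:ℝ) ^ m : ℝ) ^ (s - (1/p₁).toReal - (1/p₂).toReal))
          * besovHigh φ₀ α s p₁ p₂ q g := by
  set c : ℝ := (2:ℝ) ^ m with hcdef
  have hcm : (0:ℝ) < (2:ℝ) ^ m := zpow_pos (by norm_num) m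
  set C : ℝ≥0∞ := (‖k‖₊ : ℝ≥0∞)
      * ENNReal.ofReal (c ^ (s - (1/p₁).toReal - (1/p₂).toReal)) with hCdef
  unfold besovHigh
  have hseq : (fun j : ℤ => if c * α < (2:ℝ) ^ j
          then besovSeq φ₀ s p₁ p₂ (fun x : ℝ × ℝ => k * g (c • x)) j else 0)
      = fun j : ℤ => C * ((fun i : ℤ =>
          if α < (2:ℝ) ^ i then besovSeq φ₀ s p₁ p₂ g i else 0) (j - m)) := by
    funext j
    have hcond : (c * α < (2:ℝ) ^ j) ↔ (α < (2:ℝ) ^ (j - m)) := by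
      rw [zpow_sub₀ (two_ne_zero (α := ℝ)), lt_div_iff₀ hcm, mul_comm α ((2:ℝ) ^ m), hcdef]
    rw [besovSeq_comp φ₀ s p₁ p₂ hp₁ g k m j, if_congr hcond rfl rfl]
    simp only [mul_ite, mul_zero, hCdef, hcdef]
  rw [hseq, ellq_const_mul q hq C
      (fun i : ℤ => ((fun i : ℤ => if α < (2:ℝ) ^ i then besovSeq φ₀ s p₁ p₂ g i else 0) (i - m))),
      ellq_shift q (fun i : ℤ => if α < (2:ℝ) ^ i then besovSeq φ₀ s p₁ p₂ g i else 0) m]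

private lemma besovLow_comp (φ₀ : ℝ → ℝ) (s : ℝ) (p₁ p₂ q : ℝ≥0∞) (hp₁ : 1 ≤ p₁)
    (hq : 1 ≤ q) (α : ℝ) (g : ℝ × ℝ → ℂ) (k : ℂ) (m : ℤ) :
    besovLow φ₀ ((2:ℝ) ^ m * α) s p₁ p₂ q (fun x : ℝ × ℝ => k * g (((2:ℝ) ^ m) • x))
      = (‖k‖₊ : ℝ≥0∞)
          * ENNReal.ofReal (((2:ℝ) ^ m : ℝ) ^ (s - (1/p₁).toReal - (1/p₂).toReal))
          * besovLow φ₀ α s p₁ p₂ q g := by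
  set c : ℝ := (2:ℝ) ^ m with hcdef
  have hcm : (0:ℝ) < (2:ℝ) ^ m := zpow_pos (by norm_num) m
  set C : ℝ≥0∞ := (‖k‖₊ : ℝ≥0∞)
      * ENNReal.ofReal (c ^ (s - (1/p₁).toReal - (1/p₂).toReal)) with hCdef
  unfold besovLow
  have hseq : (fun j : ℤ => if (2:ℝ) ^ j ≤ c * α
          then besovSeq φ₀ s p₁ p₂ (fun x : ℝ × ℝ => k * g (c • x)) j else 0)
      = fun j : ℤ => C * ((fun i : ℤ =>
          if (2:ℝ) ^ i ≤ α then besovSeq φ₀ s p₁ p₂ g i else 0) (j - m)) := by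
    funext j
    have hcond : ((2:ℝ) ^ j ≤ c * α) ↔ ((2:ℝ) ^ (j - m) ≤ α) := by
      rw [zpow_sub₀ (two_ne_zero (α := ℝ)), div_le_iff₀ hcm, mul_comm α ((2:ℝ) ^ m), hcdef]
    rw [besovSeq_comp φ₀ s p₁ p₂ hp₁ g k m j, if_congr hcond rfl rfl]
    simp only [mul_ite, mul_zero, hCdef, hcdef]
  rw [hseq, ellq_const_mul q hq C
      (fun i : ℤ => ((fun i : ℤ => if (2:ℝ) ^ i ≤ α then besovSeq φ₀ s p₁ p₂ g i else 0) (i - m))),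
      ellq_shift q (fun i : ℤ => if (2:ℝ) ^ i ≤ α then besovSeq φ₀ s p₁ p₂ g i else 0) m]

private lemma hybrid_comp (φ₀ : ℝ → ℝ) (p₁ p₂ q : ℝ≥0∞) (hp₁ : 1 ≤ p₁) (hq : 1 ≤ q)
    {α : ℝ} (hα : 0 < α) (m : ℤ) (g : ℝ × ℝ → ℂ) (k : ℂ) (a : ℝ)
    (hk : (‖k‖₊ : ℝ≥0∞) = ENNReal.ofReal (((2:ℝ) ^ m : ℝ) ^ a)) :
    ENNReal.ofReal (((2:ℝ) ^ m * α) ^ (-(1/p₁).toReal)) *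
        besovHigh φ₀ ((2:ℝ) ^ m * α) (2 * (1/p₁).toReal + (1/p₂).toReal - a) p₁ p₂ q
          (fun x : ℝ × ℝ => k * g (((2:ℝ) ^ m) • x)) +
      besovLow φ₀ ((2:ℝ) ^ m * α) ((1/p₁).toReal + (1/p₂).toReal - a) p₁ p₂ q
          (fun x : ℝ × ℝ => k * g (((2:ℝ) ^ m) • x))
    = ENNReal.ofReal (α ^ (-(1/p₁).toReal)) *
        besovHigh φ₀ α (2 * (1/p₁).toReal + (1/p₂).toReal - a) p₁ p₂ q g +
      besovLow φ₀ α ((1/p₁).toReal + (1/p₂).toReal - a) p₁ p₂ q g := by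
  have hc : (0:ℝ) < (2:ℝ) ^ m := zpow_pos (by norm_num) m
  set c : ℝ := (2:ℝ) ^ m with hcdef
  set r₁ := (1/p₁).toReal with hr₁
  set r₂ := (1/p₂).toReal with hr₂
  rw [besovHigh_comp φ₀ (2 * r₁ + r₂ - a) p₁ p₂ q hp₁ hq α g k m,
      besovLow_comp φ₀ (r₁ + r₂ - a) p₁ p₂ q hp₁ hq α g k m, hk]
  set H := besovHigh φ₀ α (2 * r₁ + r₂ - a) p₁ p₂ q g
  set L := besovLow φ₀ α (r₁ + r₂ - a) p₁ p₂ q g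
  have hmul : ∀ x y : ℝ, ENNReal.ofReal (c ^ x) * ENNReal.ofReal (c ^ y)
      = ENNReal.ofReal (c ^ (x + y)) := by
    intro x y
    rw [← ENNReal.ofReal_mul (by positivity), ← Real.rpow_add hc]
  have hlow : ENNReal.ofReal (c ^ a) * ENNReal.ofReal (c ^ (r₁ + r₂ - a - r₁ - r₂)) = 1 := by
    rw [hmul, show a + (r₁ + r₂ - a - r₁ - r₂) = 0 by ring, Real.rpow_zero, ENNReal.ofReal_one]
  have hhigh : ENNReal.ofReal ((c * α) ^ (-r₁)) *
        (ENNReal.ofReal (c ^ a) * ENNReal.ofReal (c ^ (2 * r₁ + r₂ - a - r₁ - r₂)))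
      = ENNReal.ofReal (α ^ (-r₁)) := by
    rw [hmul, show a + (2 * r₁ + r₂ - a - r₁ - r₂) = r₁ by ring,
        ← ENNReal.ofReal_mul (by positivity)]
    congr 1
    rw [Real.mul_rpow hc.le hα.le]
    have h0 : c ^ (-r₁) * c ^ r₁ = 1 := by
      rw [← Real.rpow_add hc]
      norm_num
    calc c ^ (-r₁) * α ^ (-r₁) * c ^ r₁ = c ^ (-r₁) * c ^ r₁ * α ^ (-r₁) := by ring
      _ = α ^ (-r₁) := by rw [h0, one_mul]
  calc ENNReal.ofReal ((c * α) ^ (-r₁)) *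
          (ENNReal.ofReal (c ^ a) * ENNReal.ofReal (c ^ (2 * r₁ + r₂ - a - r₁ - r₂)) * H) +
        ENNReal.ofReal (c ^ a) * ENNReal.ofReal (c ^ (r₁ + r₂ - a - r₁ - r₂)) * L
      = (ENNReal.ofReal ((c * α) ^ (-r₁)) *
          (ENNReal.ofReal (c ^ a) * ENNReal.ofReal (c ^ (2 * r₁ + r₂ - a - r₁ - r₂)))) * H +
        (ENNReal.ofReal (c ^ a) * ENNReal.ofReal (c ^ (r₁ + r₂ - a - r₁ - r₂))) * L := by ring
    _ = ENNReal.ofReal (α ^ (-r₁)) * H + L := by rw [hhigh, hlow, one_mul]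

/-- scaling invariance of the data and solution norms under the dyadic
scaling `F_λ(x) = λ² F(λx)`, `u_λ(x) = λ u(λx)`, `α ↦ λα`, with `λ = 2^m`. -/
theorem statement19 (φ₀ : ℝ → ℝ)
    (hφ_smooth : ContDiff ℝ (⊤ : ℕ∞) φ₀)
    (hφ_range : ∀ ξ : ℝ, 0 ≤ φ₀ ξ ∧ φ₀ ξ ≤ 1)
    (hφ_supp : Function.support φ₀ ⊆ {ξ : ℝ | 1/2 ≤ |ξ| ∧ |ξ| ≤ 2})
    (hφ_sum : ∀ ξ : ℝ, ξ ≠ 0 → HasSum (fun j : ℤ => φ₀ ((2:ℝ) ^ (-j) * ξ)) 1)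
    (p₁ p₂ q : ℝ≥0∞) (hp₁ : 1 ≤ p₁) (hp₂ : 1 ≤ p₂) (hq : 1 ≤ q)
    (α : ℝ) (hα : 0 < α) (m : ℤ) (F u : 𝓢(ℝ × ℝ, ℂ)) :
    Dnorm φ₀ ((2:ℝ) ^ m * α) p₁ p₂ q
        (fun x : ℝ × ℝ => (((2:ℝ) ^ m : ℝ) : ℂ) ^ 2 * F (((2:ℝ) ^ m) • x))
      = Dnorm φ₀ α p₁ p₂ q ⇑F ∧
    Snorm φ₀ ((2:ℝ) ^ m * α) p₁ p₂ q
        (fun x : ℝ × ℝ => (((2:ℝ) ^ m : ℝ) : ℂ) * u (((2:ℝ) ^ m) • x))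
      = Snorm φ₀ α p₁ p₂ q ⇑u := by
  have hc : (0:ℝ) < (2:ℝ) ^ m := zpow_pos (by norm_num) m
  have hk1 : (‖((((2:ℝ) ^ m : ℝ)) : ℂ)‖₊ : ℝ≥0∞)
      = ENNReal.ofReal (((2:ℝ) ^ m : ℝ) ^ (1:ℝ)) := by
    rw [Complex.nnnorm_real, ← enorm_eq_nnnorm, Real.enorm_eq_ofReal hc.le, Real.rpow_one]
  have hk2 : (‖((((2:ℝ) ^ m : ℝ)) : ℂ) ^ 2‖₊ : ℝ≥0∞)
      = ENNReal.ofReal (((2:ℝ) ^ m : ℝ) ^ (2:ℝ)) := by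
    rw [nnnorm_pow, ENNReal.coe_pow, Complex.nnnorm_real, ← enorm_eq_nnnorm, Real.enorm_eq_ofReal hc.le,
        ← ENNReal.ofReal_pow hc.le, show (2:ℝ) = ((2:ℕ):ℝ) by norm_num, Real.rpow_natCast]
  constructor
  · unfold Dnorm
    exact hybrid_comp φ₀ p₁ p₂ q hp₁ hq hα m (⇑F) ((((2:ℝ) ^ m : ℝ) : ℂ) ^ 2) 2 hk2
  · unfold Snorm
    exact hybrid_comp φ₀ p₁ p₂ q hp₁ hq hα m (⇑u) ((((2:ℝ) ^ m : ℝ) : ℂ)) 1 hk1
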